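/- Let ρ > 0, L ≥ 0, and let ξ : ℝ → ℝ be Lipschitz with constant L such that ρ ≤ 1 + ξ′(σ) for almost every σ ∈ ℝ; set x(s) = s + ξ(s). Let M : ℝ → ℝ be measurable, bounded, and square-integrable, and define F₁(s) = −∫ G′(x(s) − x(σ))·M(σ)·(1 + ξ′(σ)) dσ, where G′(y) = −(1/2)·sgn(y)·exp(−|y|). Then: (i) |F₁(s)| ≤ (1 + L)·∫ (1/2)·exp(−ρ|s − σ|)·|M(σ)| dσ for every s; (ii) sup_s |F₁(s)| ≤ ρ⁻¹·(1 + L)·sup_σ |M(σ)|; and (iii) (∫ F₁(s)² ds)^{1/2} ≤ ρ⁻¹·(1 + L)·(∫ M(σ)² dσ)^{1/2}. -/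

import Mathlib

/-!
Since `1 + ξ' ≥ ρ` a.e. and a Lipschitz function is the integral of its derivative, `x = id + ξ`
expands distances by at least the factor `ρ`, so `|G'(x s - x σ)| ≤ ½ e^{-ρ|s - σ|}`; together
with `|1 + ξ'| ≤ 1 + L` this is the pointwise bound. The kernel `½ e^{-ρ|u|}` has integral `ρ⁻¹`,
which gives the sup bound at once and the `L²` bound by the Schur test: Cauchy–Schwarz against
the weight `½ e^{-ρ|s - σ|}`, then Fubini for the resulting convolution.
-/

open MeasureTheory Real Set

theorem integral_half_exp_neg_mul_abs {ρ : ℝ} (hρ : 0 < ρ) :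
    ∫ u, 1 / 2 * exp (-(ρ * |u|)) = ρ⁻¹ := by
  rw [integral_const_mul, integral_comp_abs (f := fun u => exp (-(ρ * u))),
    integral_comp_mul_left_Ioi (fun u => exp (-u)) 0 hρ, mul_zero, integral_exp_neg_Ioi_zero]
  simp

theorem integrable_half_exp_neg_mul_abs {ρ : ℝ} (hρ : 0 < ρ) :
    Integrable fun u : ℝ => 1 / 2 * exp (-(ρ * |u|)) :=
  .of_integral_ne_zero <| by rw [integral_half_exp_neg_mul_abs hρ]; positivity

theorem LipschitzWith.mul_sub_le_sub_of_ae_le_deriv {f f' : ℝ → ℝ} {K : NNReal} {c a b : ℝ}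
    (hf : LipschitzWith K f) (hf' : ∀ᵐ t, HasDerivAt f (f' t) t) (hc : ∀ᵐ t, c ≤ f' t)
    (hab : a ≤ b) : c * (b - a) ≤ f b - f a := by
  have hac := (hf.lipschitzOnWith (s := uIcc a b)).absolutelyContinuousOnInterval
  rw [← hac.integral_deriv_eq_sub, mul_comm, ← smul_eq_mul, ← intervalIntegral.integral_const]
  refine intervalIntegral.integral_mono_ae hab intervalIntegrable_const
    hac.intervalIntegrable_deriv ?_
  filter_upwards [hf', hc] with t ht hct
  rwa [ht.deriv]

theorem LipschitzWith.mul_abs_sub_le_abs_add_sub {ρ : ℝ} {ξ ξ' : ℝ → ℝ} {K : NNReal}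
    (hξ : LipschitzWith K ξ) (hξ' : ∀ᵐ t, HasDerivAt ξ (ξ' t) t) (hlow : ∀ᵐ t, ρ ≤ 1 + ξ' t)
    (a b : ℝ) : ρ * |a - b| ≤ |a + ξ a - (b + ξ b)| := by
  wlog hba : b ≤ a generalizing a b
  · rw [abs_sub_comm a b, abs_sub_comm (a + ξ a)]
    exact this b a (le_of_not_ge hba)
  have hξab := hξ.mul_sub_le_sub_of_ae_le_deriv (c := ρ - 1) hξ'
    (hlow.mono fun t ht => by linarith) hba
  rw [abs_of_nonneg (sub_nonneg.2 hba)]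
  exact le_abs.2 (.inl (by linarith))

noncomputable def greenDeriv (y : ℝ) : ℝ := -(1 / 2) * Real.sign y * exp (-|y|)

theorem abs_greenDeriv_le (y : ℝ) : |greenDeriv y| ≤ 1 / 2 * exp (-|y|) := by
  have hsign : |Real.sign y| ≤ 1 := by
    rcases Real.sign_apply_eq y with h | h | h <;> simp [h]
  rw [greenDeriv, abs_mul, abs_mul, abs_of_pos (exp_pos _)]
  norm_num
  nlinarith [exp_pos (-|y|)]

theorem abs_integral_greenDeriv_mul_le {ρ C s : ℝ} {x w M : ℝ → ℝ}
    (hx : ∀ σ, ρ * |s - σ| ≤ |x s - x σ|) (hw : ∀ᵐ σ, |w σ| ≤ C)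
    (hM : Integrable fun σ => 1 / 2 * exp (-(ρ * |s - σ|)) * |M σ|) :
    |∫ σ, greenDeriv (x s - x σ) * M σ * w σ|
      ≤ C * ∫ σ, 1 / 2 * exp (-(ρ * |s - σ|)) * |M σ| := by
  rw [← integral_const_mul C, ← Real.norm_eq_abs]
  refine norm_integral_le_of_norm_le (hM.const_mul C) ?_
  filter_upwards [hw] with σ hwσ
  have hG : |greenDeriv (x s - x σ)| ≤ 1 / 2 * exp (-(ρ * |s - σ|)) :=
    (abs_greenDeriv_le _).trans (by gcongr; exact hx σ)
  rw [Real.norm_eq_abs, abs_mul, abs_mul]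
  calc |greenDeriv (x s - x σ)| * |M σ| * |w σ|
      ≤ 1 / 2 * exp (-(ρ * |s - σ|)) * |M σ| * C := by gcongr
    _ = C * (1 / 2 * exp (-(ρ * |s - σ|)) * |M σ|) := by ring

theorem sq_integral_mul_le_integral_mul_integral_mul_sq {α : Type*} [MeasurableSpace α]
    {μ : Measure α} {w g : α → ℝ} (hw : 0 ≤ᵐ[μ] w) (hwi : Integrable w μ)
    (hwg : Integrable (fun a => w a * g a) μ) (hwg2 : Integrable (fun a => w a * g a ^ 2) μ) :
    (∫ a, w a * g a ∂μ) ^ 2 ≤ (∫ a, w a ∂μ) * ∫ a, w a * g a ^ 2 ∂μ := by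
  have hquad : ∀ r : ℝ, 0 ≤ (∫ a, w a ∂μ) * (r * r) + (2 * ∫ a, w a * g a ∂μ) * r
      + ∫ a, w a * g a ^ 2 ∂μ := by
    intro r
    have hexpand : ∫ a, w a * (r + g a) ^ 2 ∂μ = (∫ a, w a ∂μ) * (r * r)
        + (2 * ∫ a, w a * g a ∂μ) * r + ∫ a, w a * g a ^ 2 ∂μ := by
      have hsplit : (fun a => w a * (r + g a) ^ 2)
          = fun a => (r * r) * w a + (2 * r) * (w a * g a) + w a * g a ^ 2 := by
        funext a; ring
      rw [hsplit, integral_add, integral_add, integral_const_mul, integral_const_mul]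
      · ring
      exacts [hwi.const_mul _, hwg.const_mul _, (hwi.const_mul _).add (hwg.const_mul _), hwg2]
    rw [← hexpand]
    exact integral_nonneg_of_ae <| by
      filter_upwards [hw] with a ha using mul_nonneg ha (sq_nonneg _)
  have := discrim_le_zero hquad
  rw [discrim] at this
  linarith

section Convolution

variable {k g : ℝ → ℝ} {B : ℝ}

theorem integrable_mul_comp_sub_left_of_abs_le (hk : Integrable k)
    (hg : AEStronglyMeasurable g) (hgB : ∀ σ, |g σ| ≤ B) (s : ℝ) :
    Integrable fun σ => k (s - σ) * g σ :=
  (hk.comp_sub_left s).mul_bdd hg (.of_forall hgB)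

theorem integral_mul_comp_sub_left_le_of_abs_le (hk0 : ∀ u, 0 ≤ k u) (hk : Integrable k)
    (hg : AEStronglyMeasurable g) (hgB : ∀ σ, |g σ| ≤ B) (s : ℝ) :
    ∫ σ, k (s - σ) * |g σ| ≤ B * ∫ u, k u := by
  rw [← integral_sub_left_eq_self k volume s, ← integral_const_mul]
  refine integral_mono
    (integrable_mul_comp_sub_left_of_abs_le hk hg.norm
      (fun σ => (abs_abs (g σ)).trans_le (hgB σ)) s)
    ((hk.comp_sub_left s).const_mul B) fun σ => ?_
  rw [mul_comm B]
  exact mul_le_mul_of_nonneg_left (hgB σ) (hk0 _)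

theorem integral_sq_le_of_abs_le_integral_mul_comp_sub_left {F : ℝ → ℝ} {C : ℝ}
    (hk0 : ∀ u, 0 ≤ k u) (hk : Integrable k) (hg : AEStronglyMeasurable g)
    (hgB : ∀ σ, |g σ| ≤ B) (hg2 : Integrable fun σ => g σ ^ 2)
    (hF : ∀ s, |F s| ≤ C * ∫ σ, k (s - σ) * |g σ|) :
    ∫ s, F s ^ 2 ≤ (C * ∫ u, k u) ^ 2 * ∫ σ, g σ ^ 2 := by
  set K := convolution k (fun σ => g σ ^ 2) (ContinuousLinearMap.mul ℝ ℝ) volume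
  have hpoint : ∀ s, F s ^ 2 ≤ C ^ 2 * (∫ u, k u) * K s := by
    intro s
    have hCS := sq_integral_mul_le_integral_mul_integral_mul_sq (w := fun σ => k (s - σ))
      (g := fun σ => |g σ|) (.of_forall fun σ => hk0 _) (hk.comp_sub_left s)
      (integrable_mul_comp_sub_left_of_abs_le hk hg.norm
        (fun σ => (abs_abs (g σ)).trans_le (hgB σ)) s)
      (integrable_mul_comp_sub_left_of_abs_le (g := fun σ => |g σ| ^ 2) hk (hg.norm.pow 2)
        (fun σ => by rw [abs_pow, abs_abs]; exact pow_le_pow_left₀ (abs_nonneg _) (hgB σ) 2) s)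
    simp only [integral_sub_left_eq_self k volume s, sq_abs] at hCS
    calc F s ^ 2 = |F s| ^ 2 := (sq_abs _).symm
      _ ≤ (C * ∫ σ, k (s - σ) * |g σ|) ^ 2 := pow_le_pow_left₀ (abs_nonneg _) (hF s) 2
      _ = C ^ 2 * (∫ σ, k (s - σ) * |g σ|) ^ 2 := mul_pow _ _ _
      _ ≤ C ^ 2 * ((∫ u, k u) * ∫ σ, k (s - σ) * g σ ^ 2) :=
        mul_le_mul_of_nonneg_left hCS (sq_nonneg C)
      _ = C ^ 2 * (∫ u, k u) * K s := by rw [show K s = _ from convolution_mul_swap]; ring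
  calc ∫ s, F s ^ 2 ≤ ∫ s, C ^ 2 * (∫ u, k u) * K s :=
        integral_mono_of_nonneg (.of_forall fun s => sq_nonneg _)
          ((hk.integrable_convolution _ hg2).const_mul _) (.of_forall hpoint)
    _ = (C * ∫ u, k u) ^ 2 * ∫ σ, g σ ^ 2 := by
      rw [integral_const_mul, integral_convolution _ hk hg2]
      simp only [ContinuousLinearMap.mul_apply']
      ring

end Convolution

/-- Pointwise, sup-norm, and `L²` estimates for the nonlinear map
`F₁(s) = −∫ G'(x(s) − x(σ))·M(σ)·(1 + ξ'(σ)) dσ`, where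
`G'(y) = −(1/2)·sgn(y)·exp(−|y|)` and `x(s) = s + ξ(s)`. -/
theorem stmt_12 (ρ L : ℝ) (hρ : 0 < ρ) (hL : 0 ≤ L) (ξ ξ' : ℝ → ℝ)
    (hlip : ∀ a b : ℝ, |ξ a - ξ b| ≤ L * |a - b|)
    (hderiv : ∀ᵐ σ ∂volume, HasDerivAt ξ (ξ' σ) σ)
    (hlow : ∀ᵐ σ ∂volume, ρ ≤ 1 + ξ' σ)
    (x : ℝ → ℝ) (hx : ∀ s, x s = s + ξ s)
    (M : ℝ → ℝ) (hMm : Measurable M)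
    (hMb : BddAbove (Set.range fun σ => |M σ|))
    (hM2 : Integrable (fun σ => (M σ) ^ 2) volume)
    (F₁ : ℝ → ℝ)
    (hF₁ : ∀ s, F₁ s =
      -∫ σ, (-(1 / 2) * Real.sign (x s - x σ) * Real.exp (-|x s - x σ|)) *
        M σ * (1 + ξ' σ)) :
    (∀ s : ℝ, |F₁ s| ≤
      (1 + L) * ∫ σ, (1 / 2) * Real.exp (-(ρ * |s - σ|)) * |M σ|) ∧
    (∀ s : ℝ, |F₁ s| ≤ ρ⁻¹ * (1 + L) * ⨆ σ, |M σ|) ∧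
    (Real.sqrt (∫ s, (F₁ s) ^ 2) ≤
      ρ⁻¹ * (1 + L) * Real.sqrt (∫ σ, (M σ) ^ 2)) := by
  have hξ : LipschitzWith ⟨L, hL⟩ ξ := .of_dist_le_mul hlip
  have hgap : ∀ s σ, ρ * |s - σ| ≤ |x s - x σ| := fun s σ => by
    rw [hx, hx]
    exact hξ.mul_abs_sub_le_abs_add_sub hderiv hlow s σ
  have hw : ∀ᵐ σ, |1 + ξ' σ| ≤ 1 + L := by
    filter_upwards [hderiv] with σ hσ
    have hξ'σ : |ξ' σ| ≤ L := hσ.le_of_lipschitz hξ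
    linarith [abs_add_le 1 (ξ' σ), abs_one (α := ℝ)]
  have hMB : ∀ σ, |M σ| ≤ ⨆ τ, |M τ| := le_ciSup hMb
  have hMabsB : ∀ σ, |(|M σ|)| ≤ ⨆ τ, |M τ| := fun σ => (abs_abs _).trans_le (hMB σ)
  set k := fun u : ℝ => 1 / 2 * exp (-(ρ * |u|))
  have hk := integrable_half_exp_neg_mul_abs hρ
  have hk0 : ∀ u, 0 ≤ k u := fun u => by positivity
  have hpoint : ∀ s, |F₁ s| ≤ (1 + L) * ∫ σ, k (s - σ) * |M σ| := fun s => by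
    rw [hF₁, abs_neg]
    exact abs_integral_greenDeriv_mul_le (hgap s) hw
      (integrable_mul_comp_sub_left_of_abs_le hk hMm.abs.aestronglyMeasurable hMabsB s)
  refine ⟨hpoint, fun s => ?_, ?_⟩
  · calc |F₁ s| ≤ (1 + L) * ∫ σ, k (s - σ) * |M σ| := hpoint s
      _ ≤ (1 + L) * ((⨆ τ, |M τ|) * ρ⁻¹) := by
        gcongr
        rw [← integral_half_exp_neg_mul_abs hρ]
        exact integral_mul_comp_sub_left_le_of_abs_le hk0 hk hMm.aestronglyMeasurable hMB s
      _ = ρ⁻¹ * (1 + L) * ⨆ τ, |M τ| := by ring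
  · have hL2 := integral_sq_le_of_abs_le_integral_mul_comp_sub_left hk0 hk
      hMm.aestronglyMeasurable hMB hM2 hpoint
    rw [integral_half_exp_neg_mul_abs hρ] at hL2
    calc √(∫ s, F₁ s ^ 2) ≤ √(((1 + L) * ρ⁻¹) ^ 2 * ∫ σ, M σ ^ 2) := Real.sqrt_le_sqrt hL2
      _ = ρ⁻¹ * (1 + L) * √(∫ σ, M σ ^ 2) := by
        rw [Real.sqrt_mul (sq_nonneg _), Real.sqrt_sq (by positivity)]
        ring
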